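/- For every m ≥ 1, the representation V₊(m) of the conifold quiver (with y = w = 0, x(e_i) = f_i, z(e_i) = f_{i+1}) is stable with respect to the slope function ζ(V) = ζ₀ dim V₀ + ζ₁ dim V₁ whenever ζ₀ > ζ₁: every proper nonzero subrepresentation W ⊆ V₊(m) satisfies ζ(W)/(dim W₀ + dim W₁) < ζ(V₊(m))/(m−1+m). -/

import Mathlib

/-!
The arrow `x` is injective, and `z(W₀) ⊄ x(W₀)` for `W₀ ≠ 0`: otherwise every `w ∈ W₀` has
vanishing last coordinate and its shift `e_i ↦ e_{i+1}` lies in `W₀` again (it is the `u` with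
`z w = x u`), so shifting any coordinate of `w` to the last place shows that it vanishes.
Hence `dim W₁ ≥ dim (x W₀ + z W₀) > dim W₀`, and properness gives `dim W₀ < m - 1`; together
`dim W₀ · m < (m - 1) · dim W₁`, which for `ζ₀ > ζ₁` is the slope inequality.
-/

/-- The arrow `x` of the representation `V₊(k+1)` of the conifold quiver:
`V₀ = ℂ^k` (basis `e₁,…,e_k`), `V₁ = ℂ^{k+1}` (basis `f₁,…,f_{k+1}`), `x(e_i) = f_i`. -/
def xMap (k : ℕ) : (Fin k → ℂ) →ₗ[ℂ] (Fin (k + 1) → ℂ) where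
  toFun v j := if h : (j : ℕ) < k then v ⟨j, h⟩ else 0
  map_add' u v := by funext j; by_cases h : (j : ℕ) < k <;> simp [h]
  map_smul' c v := by funext j; by_cases h : (j : ℕ) < k <;> simp [h]

/-- The arrow `z` of the representation `V₊(k+1)`: `z(e_i) = f_{i+1}`. -/
def zMap (k : ℕ) : (Fin k → ℂ) →ₗ[ℂ] (Fin (k + 1) → ℂ) where
  toFun v j := if h : 0 < (j : ℕ) then v ⟨(j : ℕ) - 1, by have := j.isLt; omega⟩ else 0
  map_add' u v := by funext j; by_cases h : 0 < (j : ℕ) <;> simp only [h, ↓reduceDIte, dite_true, dite_false, Pi.add_apply, Pi.smul_apply, add_zero, smul_zero, RingHom.id_apply]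
  map_smul' c v := by funext j; by_cases h : 0 < (j : ℕ) <;> simp only [h, ↓reduceDIte, dite_true, dite_false, Pi.add_apply, Pi.smul_apply, add_zero, smul_zero, RingHom.id_apply]

open Module

theorem Submodule.finrank_lt_finrank_sup_map {K M N : Type*} [DivisionRing K] [AddCommGroup M]
    [Module K M] [AddCommGroup N] [Module K N] [FiniteDimensional K N] {f g : M →ₗ[K] N}
    (hf : Function.Injective f) {W : Submodule K M} (h : ¬W.map g ≤ W.map f) :
    finrank K W < finrank K ↥(W.map f ⊔ W.map g) :=
  calc finrank K W = finrank K (W.map f) := (Submodule.equivMapOfInjective f hf W).finrank_eq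
    _ < finrank K ↥(W.map f ⊔ W.map g) := Submodule.finrank_lt_finrank_of_lt (left_lt_sup.mpr h)

theorem slope_lt_slope_of_mul_lt_mul {ζ₀ ζ₁ a b p q : ℝ} (hζ : ζ₁ < ζ₀) (hab : 0 < a + b)
    (hpq : 0 < p + q) (h : a * q < p * b) :
    (ζ₀ * a + ζ₁ * b) / (a + b) < (ζ₀ * p + ζ₁ * q) / (p + q) := by
  rw [div_lt_div_iff₀ hab hpq]
  nlinarith [mul_pos (sub_pos.mpr hζ) (sub_pos.mpr h)]

section Conifold

variable {k : ℕ}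

@[simp]
theorem xMap_apply_castSucc (v : Fin k → ℂ) (i : Fin k) : xMap k v i.castSucc = v i := by
  simp [xMap]

@[simp]
theorem xMap_apply_last (v : Fin k → ℂ) : xMap k v (Fin.last k) = 0 := by
  simp [xMap]

@[simp]
theorem zMap_apply_succ (v : Fin k → ℂ) (i : Fin k) : zMap k v i.succ = v i := by
  simp [zMap]

theorem xMap_injective : Function.Injective (xMap k) := fun u v huv =>
  funext fun i => by simpa using congrFun huv i.castSucc

theorem eq_bot_of_map_zMap_le_map_xMap {W₀ : Submodule ℂ (Fin k → ℂ)}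
    (hle : W₀.map (zMap k) ≤ W₀.map (xMap k)) : W₀ = ⊥ := by
  have shift (w) (hw : w ∈ W₀) : ∃ u ∈ W₀, xMap k u = zMap k w := hle ⟨w, hw, rfl⟩
  have vanish (d : ℕ) : ∀ w ∈ W₀, ∀ i : Fin k, (i : ℕ) + d + 1 = k → w i = 0 := by
    induction d with
    | zero =>
      intro w hw i hi
      obtain ⟨u, -, hu⟩ := shift w hw
      have hlast : i.succ = Fin.last k := Fin.ext (by simpa using hi)
      have hui := congrFun hu i.succ
      rw [zMap_apply_succ, hlast, xMap_apply_last] at hui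
      exact hui.symm
    | succ d ih =>
      intro w hw i hi
      obtain ⟨u, huW, hu⟩ := shift w hw
      have hnext : (i : ℕ) + 1 < k := by omega
      have hui : xMap k u (⟨i + 1, hnext⟩ : Fin k).castSucc = zMap k w i.succ := congrFun hu i.succ
      rw [xMap_apply_castSucc, zMap_apply_succ] at hui
      exact hui ▸ ih u huW _ (by dsimp only; omega)
  refine (Submodule.eq_bot_iff _).mpr fun w hw => funext fun i => ?_
  exact vanish (k - 1 - i) w hw i (by omega)

theorem finrank_add_one_le_of_map_le {W₀ : Submodule ℂ (Fin k → ℂ)}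
    {W₁ : Submodule ℂ (Fin (k + 1) → ℂ)} (hx : W₀.map (xMap k) ≤ W₁)
    (hz : W₀.map (zMap k) ≤ W₁) (hne : ¬(W₀ = ⊥ ∧ W₁ = ⊥)) :
    finrank ℂ W₀ + 1 ≤ finrank ℂ W₁ := by
  by_cases h₀ : W₀ = ⊥
  · have h₁ : W₁ ≠ ⊥ := fun h₁ => hne ⟨h₀, h₁⟩
    rw [h₀, finrank_bot, zero_add, Nat.one_le_iff_ne_zero, Ne, Submodule.finrank_eq_zero]
    exact h₁
  · have hlt := Submodule.finrank_lt_finrank_sup_map xMap_injective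
      (mt eq_bot_of_map_zMap_le_map_xMap h₀)
    exact hlt.trans_le (Submodule.finrank_mono (sup_le hx hz))

end Conifold

/-- Stability of `V₊(m)` for `m = k+1 ≥ 1` when `ζ₀ > ζ₁`: every proper nonzero
subrepresentation `(W₀, W₁)` (subspaces with `x(W₀) ⊆ W₁` and `z(W₀) ⊆ W₁`; the
arrows `y, w` are zero) has strictly smaller normalized slope than
`V₊(m)` itself, whose slope is `(ζ₀(m−1) + ζ₁m)/(m−1+m)`. -/
theorem Vplus_stable (k : ℕ) (ζ₀ ζ₁ : ℝ) (h : ζ₁ < ζ₀)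
    (W₀ : Submodule ℂ (Fin k → ℂ)) (W₁ : Submodule ℂ (Fin (k + 1) → ℂ))
    (hx : W₀.map (xMap k) ≤ W₁) (hz : W₀.map (zMap k) ≤ W₁)
    (hne : ¬(W₀ = ⊥ ∧ W₁ = ⊥)) (hpr : ¬(W₀ = ⊤ ∧ W₁ = ⊤)) :
    (ζ₀ * (Module.finrank ℂ W₀ : ℝ) + ζ₁ * (Module.finrank ℂ W₁ : ℝ)) /
        ((Module.finrank ℂ W₀ : ℝ) + (Module.finrank ℂ W₁ : ℝ))
      < (ζ₀ * k + ζ₁ * (k + 1)) / (k + (k + 1)) := by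
  have hab := finrank_add_one_le_of_map_le hx hz hne
  have hb : finrank ℂ W₁ ≤ k + 1 := (Submodule.finrank_le W₁).trans_eq (finrank_fin_fun ℂ)
  have hak : finrank ℂ W₀ < k := by
    refine ((Submodule.finrank_le W₀).trans_eq (finrank_fin_fun ℂ)).lt_of_ne fun ha => hpr ⟨?_, ?_⟩
    · exact Submodule.eq_top_of_finrank_eq (by rw [ha, finrank_fin_fun])
    · exact Submodule.eq_top_of_finrank_eq (by rw [finrank_fin_fun]; omega)
  have hmul : finrank ℂ W₀ * (k + 1) < k * finrank ℂ W₁ := by nlinarith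
  have hpos : (0 : ℝ) < finrank ℂ W₀ + finrank ℂ W₁ := by exact_mod_cast (by omega)
  exact slope_lt_slope_of_mul_lt_mul h hpos (by positivity) (by exact_mod_cast hmul)
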